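/- Let G = (W,R) be the fan frame with root r and, for each n ∈ ω, a disjoint branch order-isomorphic to (n,<). Let φ be the modal formula □(p∧□p⊃q)∨□(q∧□q⊃p) for distinct propositional variables p, q. Then for every n ∈ ω, the frame G validates the formula ¬φ ⊃ ◇ⁿ⊤. -/

import Mathlib

/-- Modal formulas over a countable set of propositional variables. -/
inductive Fml : Type where
  | prop : ℕ → Fml
  | top : Fml
  | and : Fml → Fml → Fml
  | neg : Fml → Fml
  | box : Fml → Fml

namespace Fml
/-- `⊥` abbreviates `¬⊤`. -/
def bot : Fml := neg top
/-- `φ ∨ ψ` abbreviates `¬(¬φ ∧ ¬ψ)`. -/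
def or (φ ψ : Fml) : Fml := neg (and (neg φ) (neg ψ))
/-- `φ ⊃ ψ` abbreviates `¬(φ ∧ ¬ψ)`. -/
def imp (φ ψ : Fml) : Fml := neg (and φ (neg ψ))
/-- `◇φ` abbreviates `¬□¬φ`. -/
def dia (φ : Fml) : Fml := neg (box (neg φ))
/-- `◇ⁿφ`: n-fold application of `◇`. -/
def dian : ℕ → Fml → Fml
  | 0, φ => φ
  | n+1, φ => dia (dian n φ)
end Fml

/-- Truth of a modal formula at a world of a Kripke model `(W, R, v)`. -/
def Truth {W : Type} (R : W → W → Prop) (v : ℕ → Set W) : Fml → W → Prop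
  | .prop n, w => w ∈ v n
  | .top, _ => True
  | .and φ ψ, w => Truth R v φ w ∧ Truth R v ψ w
  | .neg φ, w => ¬ Truth R v φ w
  | .box φ, w => ∀ w', R w w' → Truth R v φ w'

/-- A frame validates `φ` if `φ` is true at every world under every valuation. -/
def Valid {W : Type} (R : W → W → Prop) (φ : Fml) : Prop :=
  ∀ (v : ℕ → Set W) (w : W), Truth R v φ w

/-- The worlds of the fan frame: the root `none` together with, for each `n ∈ ω`,
a branch `{(n, i) : i < n}`. -/
def FanW : Type := Option ((n : ℕ) × Fin n)

/-- The accessibility relation of the fan frame: the root sees every branch point,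
and `(n, i)` sees `(m, j)` iff `n = m` and `i < j`. -/
def FanR : FanW → FanW → Prop := fun a b =>
  match a, b with
  | none, some _ => True
  | some ⟨n, i⟩, some ⟨m, j⟩ => n = m ∧ (i : ℕ) < (j : ℕ)
  | _, _ => False

/-- The formula `□(p ∧ □p ⊃ q) ∨ □(q ∧ □q ⊃ p)` with `p = prop 0`, `q = prop 1`. -/
def fml14 : Fml :=
  Fml.or
    (Fml.box (Fml.imp (Fml.and (Fml.prop 0) (Fml.box (Fml.prop 0))) (Fml.prop 1)))
    (Fml.box (Fml.imp (Fml.and (Fml.prop 1) (Fml.box (Fml.prop 1))) (Fml.prop 0)))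

/-! The branches of the fan are strict linear orders, so `fml14` (an instance of the `.3` axiom)
holds at every branch point; at the root, the branch of length `n` supplies an `R`-chain
of length `n`, witnessing `◇ⁿ⊤`. -/

section Semantics

variable {W : Type} {R : W → W → Prop} {v : ℕ → Set W}

theorem truth_imp {φ ψ : Fml} {w : W} :
    Truth R v (Fml.imp φ ψ) w ↔ (Truth R v φ w → Truth R v ψ w) := by
  simp [Fml.imp, Truth]

theorem truth_dia {φ : Fml} {w : W} :
    Truth R v (Fml.dia φ) w ↔ ∃ w', R w w' ∧ Truth R v φ w' := by
  simp [Fml.dia, Truth]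

theorem truth_fml14_of_successors_comparable {w : W}
    (hcomp : ∀ y z, R w y → R w z → R y z ∨ y = z ∨ R z y) : Truth R v fml14 w := by
  simp only [fml14, Fml.or, Fml.imp, Truth, not_forall, not_not, not_and]
  rintro ⟨y, hwy, ⟨hpy, hboxpy⟩, hqy⟩ ⟨z, hwz, ⟨hqz, hboxqz⟩, hpz⟩
  rcases hcomp y z hwy hwz with hyz | rfl | hzy
  · exact hpz (hboxpy z hyz)
  · exact hpz hpy
  · exact hqy (hboxqz y hzy)

end Semantics

theorem FanR.successors_comparable_of_branch (a : (n : ℕ) × Fin n) (y z : FanW)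
    (hy : FanR (some a) y) (hz : FanR (some a) z) : FanR y z ∨ y = z ∨ FanR z y := by
  obtain ⟨n, i⟩ := a
  match y, z, hy, hz with
  | some ⟨_, j⟩, some ⟨_, k⟩, ⟨rfl, _⟩, ⟨rfl, _⟩ =>
    rcases lt_trichotomy (j : ℕ) k with hjk | hjk | hjk
    · exact Or.inl ⟨rfl, hjk⟩
    · exact Or.inr (Or.inl (by rw [Fin.ext hjk]))
    · exact Or.inr (Or.inr ⟨rfl, hjk⟩)

theorem truth_dian_top_branch (v : ℕ → Set FanW) (k : ℕ) {m : ℕ} (i : Fin m)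
    (hik : (i : ℕ) + k < m) : Truth FanR v (Fml.dian k Fml.top) (some ⟨m, i⟩) := by
  induction k generalizing i with
  | zero => trivial
  | succ k ih =>
    exact truth_dia.mpr ⟨some ⟨m, ⟨i + 1, by omega⟩⟩, ⟨rfl, Nat.lt_succ_self i⟩,
      ih _ (show (i : ℕ) + 1 + k < m by omega)⟩

theorem truth_dian_top_root (v : ℕ → Set FanW) (n : ℕ) :
    Truth FanR v (Fml.dian n Fml.top) none := by
  cases n with
  | zero => trivial
  | succ k =>
    exact truth_dia.mpr ⟨some ⟨k + 1, 0⟩, trivial, truth_dian_top_branch v k 0 (by simp)⟩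

theorem stmt15 (n : ℕ) :
    Valid FanR (Fml.imp (Fml.neg fml14) (Fml.dian n Fml.top)) := by
  intro v w
  rw [truth_imp]
  intro hneg
  cases w with
  | none => exact truth_dian_top_root v n
  | some a =>
    exact absurd (truth_fml14_of_successors_comparable
      (FanR.successors_comparable_of_branch a)) hneg
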